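/- arXiv:1409.3394 — 2 statements merged into one kernel-verified Lean document; each statement's English description precedes it below -/
import Mathlib

section
/- Suppose g : (0,∞) → ℝ is twice differentiable, and for fixed y > 0, t ≥ 0, β > 0, define G(x,θ) = e^{-βt} x^{1-R}/(1-R) · g(yθ/x) for x > 0, θ > 0. If (1-R)g(z)·z²g''(z) + R(zg'(z))² ≤ 0 for all z > 0, g ≥ 0 whenever 0 < R < 1, and (1-R)g > 0, then the determinant of the Hessian of G with respect to (x,θ) satisfies G_xx·G_θθ - (G_xθ)² = -e^{-2βt} x^{-2R} θ^{-2} (R/(1-R)²)·[(1-R)g(z)z²g''(z) + R(zg'(z))²] ≥ 0, where z = yθ/x. -/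
/-- the Hessian determinant identity for
G(x,θ) = e^{-βt} x^{1-R} g(yθ/x)/(1-R), and its nonnegativity under the
concavity-type inequality on g. -/
theorem stmt8 (R β t x y θ z : ℝ) (hR : 0 < R) (hR1 : R ≠ 1) (hβ : 0 < β)
    (ht : 0 ≤ t) (hy : 0 < y) (hx : 0 < x) (hθ : 0 < θ) (hz : z = y * θ / x)
    (g : ℝ → ℝ)
    (hineq : ∀ s > (0 : ℝ),
      (1 - R) * g s * (s ^ 2 * deriv (deriv g) s) + R * (s * deriv g s) ^ 2 ≤ 0)
    (hgnonneg : 0 < R → R < 1 → ∀ s > (0 : ℝ), 0 ≤ g s)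
    (hgpos : ∀ s > (0 : ℝ), 0 < (1 - R) * g s)
    (Gxx Gxθ Gθθ : ℝ)
    (hGxx : Gxx = Real.exp (-β * t) * x ^ (-R - 1) *
      (-R * g z + 2 * R / (1 - R) * z * deriv g z + 1 / (1 - R) * z ^ 2 * deriv (deriv g) z))
    (hGxθ : Gxθ = -Real.exp (-β * t) * x ^ (-R - 1) * (y / (1 - R)) *
      (R * deriv g z + z * deriv (deriv g) z))
    (hGθθ : Gθθ = Real.exp (-β * t) * x ^ (-R - 1) * (y ^ 2 / (1 - R)) * deriv (deriv g) z) :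
    Gxx * Gθθ - Gxθ ^ 2 =
      -Real.exp (-2 * β * t) * x ^ (-(2 : ℝ) * R) * θ ^ (-(2 : ℝ)) * (R / (1 - R) ^ 2) *
        ((1 - R) * g z * (z ^ 2 * deriv (deriv g) z) + R * (z * deriv g z) ^ 2) ∧
    0 ≤ Gxx * Gθθ - Gxθ ^ 2 := by
  have hR1' : (1 : ℝ) - R ≠ 0 := by intro h; apply hR1; linarith
  have hE : Real.exp (-β * t) * Real.exp (-β * t) = Real.exp (-2 * β * t) := by
    rw [← Real.exp_add]; ring_nf
  have hX : x ^ (-(2 : ℝ) * R) = x ^ (-R - 1) * x ^ (-R - 1) * x ^ (2 : ℕ) := by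
    rw [← Real.rpow_natCast x 2, ← Real.rpow_add hx, ← Real.rpow_add hx]
    norm_num
    ring_nf
  have hθ2 : θ ^ (-(2 : ℝ)) = (θ ^ (2 : ℕ))⁻¹ := by
    rw [← Real.rpow_natCast θ 2, ← Real.rpow_neg hθ.le]
    norm_num
  have hzy : z * x = y * θ := by
    rw [hz]; field_simp
  have key : Gxx * Gθθ - Gxθ ^ 2 =
      -Real.exp (-2 * β * t) * x ^ (-(2 : ℝ) * R) * θ ^ (-(2 : ℝ)) * (R / (1 - R) ^ 2) *
        ((1 - R) * g z * (z ^ 2 * deriv (deriv g) z) + R * (z * deriv g z) ^ 2) := by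
    have hy' : y = z * x / θ := by
      rw [eq_div_iff hθ.ne']; linarith [hzy]
    rw [hGxx, hGxθ, hGθθ, ← hE, hX, hθ2, hy']
    field_simp
    ring
  refine ⟨key, ?_⟩
  rw [key]
  have hzpos : 0 < z := by rw [hz]; positivity
  have hs := hineq z hzpos
  have hC : 0 < Real.exp (-2 * β * t) * x ^ (-(2 : ℝ) * R) * θ ^ (-(2 : ℝ)) *
      (R / (1 - R) ^ 2) := by
    have : 0 < (1 - R) ^ 2 := by positivity
    have : 0 < R / (1 - R) ^ 2 := by positivity
    positivity
  nlinarith [mul_nonneg hC.le (neg_nonneg.2 hs)]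
end

section
/- Suppose 0 < R < 1 and suppose g : (0,∞) → (0,∞) is twice differentiable with g' > 0, satisfying (1-R)g(z)·z²g''(z) + R(zg'(z))² ≤ 0 for all z ∈ (0, z*), and satisfying g(z*) = m*(1+z*)^{1-R} and z*g'(z*) = m*(1-R)(1+z*)^{-R}·z* for some m* > 0 and z* > 0. Define ψ(z) = (1+z)/(1-R) - g(z)/g'(z). Then ψ(z*) = 0, ψ'(z) = R/(1-R) + g(z)g''(z)/g'(z)² ≤ 0 on (0,z*), and hence ψ(z) ≥ 0 for all z ∈ (0, z*]. -/
/-!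
Since `(g / g')' = 1 - g g'' / g'²`, the derivative of `ψ` is `R / (1 - R) + g g'' / g'²`, which is
the hypothesis on `g` divided by `(1 - R) (z g')² > 0`; hence `ψ` is antitone on `(0, z*]`.
The value-matching and smooth-fit conditions at `z*` give `g / g' = (1 + z*) / (1 - R)` there,
i.e. `ψ z* = 0`.
-/

open Set

lemma HasDerivAt.div_of_hasDerivAt_deriv {g g' : ℝ → ℝ} {g'' z : ℝ}
    (hg : HasDerivAt g (g' z) z) (hg' : HasDerivAt g' g'' z) (hne : g' z ≠ 0) :
    HasDerivAt (fun x => g x / g' x) (1 - g z * g'' / g' z ^ 2) z := by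
  refine (hg.fun_div hg' hne).congr_deriv ?_
  field_simp

lemma div_one_sub_add_mul_div_sq_nonpos {r a b c z : ℝ} (hr : r < 1) (hb : b ≠ 0)
    (hz : z ≠ 0) (h : (1 - r) * a * (z ^ 2 * c) + r * (z * b) ^ 2 ≤ 0) :
    r / (1 - r) + a * c / b ^ 2 ≤ 0 := by
  have hr' : 0 < 1 - r := sub_pos.mpr hr
  calc r / (1 - r) + a * c / b ^ 2
      = ((1 - r) * a * (z ^ 2 * c) + r * (z * b) ^ 2) / ((1 - r) * (z * b) ^ 2) := by
        field_simp
        ring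
    _ ≤ 0 := div_nonpos_of_nonpos_of_nonneg h (by positivity)

lemma mul_rpow_one_sub_div_mul_rpow_neg {m r x : ℝ} (hm : m ≠ 0) (hr : r ≠ 1) (hx : 0 < x) :
    m * x ^ (1 - r) / (m * (1 - r) * x ^ (-r)) = x / (1 - r) := by
  have hr' : 1 - r ≠ 0 := sub_ne_zero.mpr hr.symm
  rw [sub_eq_add_neg, Real.rpow_add hx, Real.rpow_one, ← sub_eq_add_neg]
  field_simp [(Real.rpow_pos_of_pos hx (-r)).ne']

theorem stmt11_general (R mstar zstar : ℝ) (hR1 : R < 1)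
    (hmstar : 0 < mstar) (hzstar : 0 < zstar)
    (g : ℝ → ℝ) (hg' : ∀ z > (0 : ℝ), 0 < deriv g z)
    (hdiff : ∀ z > (0 : ℝ), HasDerivAt g (deriv g z) z)
    (hdiff2 : ∀ z > (0 : ℝ), HasDerivAt (deriv g) (deriv (deriv g) z) z)
    (hineq : ∀ z ∈ Set.Ioo (0 : ℝ) zstar,
      (1 - R) * g z * (z ^ 2 * deriv (deriv g) z) + R * (z * deriv g z) ^ 2 ≤ 0)
    (hval : g zstar = mstar * (1 + zstar) ^ (1 - R))
    (hsmooth : zstar * deriv g zstar = mstar * (1 - R) * (1 + zstar) ^ (-R) * zstar)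
    (ψ : ℝ → ℝ) (hψ : ∀ z, ψ z = (1 + z) / (1 - R) - g z / deriv g z) :
    ψ zstar = 0 ∧
    (∀ z ∈ Set.Ioo (0 : ℝ) zstar,
      deriv ψ z = R / (1 - R) + g z * deriv (deriv g) z / (deriv g z) ^ 2 ∧
      deriv ψ z ≤ 0) ∧
    (∀ z ∈ Set.Ioc (0 : ℝ) zstar, 0 ≤ ψ z) := by
  have hR1' : 1 - R ≠ 0 := sub_ne_zero.mpr hR1.ne'
  have hψ_deriv : ∀ z > (0 : ℝ),
      HasDerivAt ψ (R / (1 - R) + g z * deriv (deriv g) z / (deriv g z) ^ 2) z := by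
    intro z hz
    have hlin : HasDerivAt (fun x : ℝ => (1 + x) / (1 - R)) (1 / (1 - R)) z := by
      simpa using ((hasDerivAt_id z).const_add 1).div_const (1 - R)
    rw [funext hψ]
    refine (hlin.sub
      ((hdiff z hz).div_of_hasDerivAt_deriv (hdiff2 z hz) (hg' z hz).ne')).congr_deriv ?_
    field_simp
    ring
  have hψ_deriv_nonpos : ∀ z ∈ Ioo (0 : ℝ) zstar,
      R / (1 - R) + g z * deriv (deriv g) z / (deriv g z) ^ 2 ≤ 0 := fun z hz =>
    div_one_sub_add_mul_div_sq_nonpos hR1 (hg' z hz.1).ne' hz.1.ne' (hineq z hz)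
  have hg'star : deriv g zstar = mstar * (1 - R) * (1 + zstar) ^ (-R) :=
    mul_left_cancel₀ hzstar.ne' (hsmooth.trans (mul_comm _ _))
  have hψ_star : ψ zstar = 0 := by
    rw [hψ, hval, hg'star,
      mul_rpow_one_sub_div_mul_rpow_neg hmstar.ne' hR1.ne (by linarith), sub_self]
  have hψ_anti : AntitoneOn ψ (Ioc 0 zstar) := by
    refine antitoneOn_of_deriv_nonpos (convex_Ioc 0 zstar)
      (fun z hz => (hψ_deriv z hz.1).continuousAt.continuousWithinAt) ?_ ?_
    · rw [interior_Ioc]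
      exact fun z hz => (hψ_deriv z hz.1).differentiableAt.differentiableWithinAt
    · rw [interior_Ioc]
      exact fun z hz => (hψ_deriv z hz.1).deriv ▸ hψ_deriv_nonpos z hz
  refine ⟨hψ_star, fun z hz => ⟨(hψ_deriv z hz.1).deriv, ?_⟩, fun z hz => ?_⟩
  · exact (hψ_deriv z hz.1).deriv ▸ hψ_deriv_nonpos z hz
  · exact hψ_star ▸ hψ_anti hz (right_mem_Ioc.mpr hzstar) hz.2

/-- monotonicity of ψ(z) = (1+z)/(1-R) - g(z)/g'(z) and the
resulting nonnegativity (the variational inequality MG ≥ 0). -/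
theorem stmt11 (R mstar zstar : ℝ) (hR0 : 0 < R) (hR1 : R < 1)
    (hmstar : 0 < mstar) (hzstar : 0 < zstar)
    (g : ℝ → ℝ) (hgpos : ∀ z > (0 : ℝ), 0 < g z) (hg' : ∀ z > (0 : ℝ), 0 < deriv g z)
    (hdiff : ∀ z > (0 : ℝ), HasDerivAt g (deriv g z) z)
    (hdiff2 : ∀ z > (0 : ℝ), HasDerivAt (deriv g) (deriv (deriv g) z) z)
    (hineq : ∀ z ∈ Set.Ioo (0 : ℝ) zstar,
      (1 - R) * g z * (z ^ 2 * deriv (deriv g) z) + R * (z * deriv g z) ^ 2 ≤ 0)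
    (hval : g zstar = mstar * (1 + zstar) ^ (1 - R))
    (hsmooth : zstar * deriv g zstar = mstar * (1 - R) * (1 + zstar) ^ (-R) * zstar)
    (ψ : ℝ → ℝ) (hψ : ∀ z, ψ z = (1 + z) / (1 - R) - g z / deriv g z) :
    ψ zstar = 0 ∧
    (∀ z ∈ Set.Ioo (0 : ℝ) zstar,
      deriv ψ z = R / (1 - R) + g z * deriv (deriv g) z / (deriv g z) ^ 2 ∧
      deriv ψ z ≤ 0) ∧
    (∀ z ∈ Set.Ioc (0 : ℝ) zstar, 0 ≤ ψ z) :=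
  stmt11_general R mstar zstar hR1 hmstar hzstar g hg' hdiff hdiff2 hineq hval hsmooth ψ hψ
end
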